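/- Let a > 0, b > 0 and t > 0. Then there exist constants C > 0 and M > 0 such that for all real m ≥ M, |R_m| ≤ C · e^{−2m·arctan(b/a)}, i.e. the residue contribution R_m satisfies R_m = O(e^{−2m arctan(b/a)}) as m → ∞. -/

import Mathlib

open Complex Real

/-! With `w = (a + ib) t`, we have `e^{w/m} - 1 = (w/m)(1 + O(1/m))`, so
`v₀ = arg (e^{w/m} - 1) = arctan (b/a) + O(1/m)` and `2 m v₀ ≥ 2 m arctan (b/a) - O(1)`.
The denominator `cosh (2 m v₀) - cos (2 m u₀)` is then at least a multiple of `e^{2 m v₀}`,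
while the numerator stays bounded, so `R_m = O(e^{-2 m v₀}) = O(e^{-2 m arctan (b/a)})`. -/

namespace Complex

theorem arg_eq_arctan_of_re_pos {z : ℂ} (hz : 0 < z.re) : arg z = Real.arctan (z.im / z.re) := by
  have hlt := abs_lt.1 (abs_arg_lt_pi_div_two_iff.2 (Or.inl hz))
  rw [← tan_arg, Real.arctan_tan hlt.1 hlt.2]

theorem abs_arg_one_add_le {ε : ℂ} (hε : ‖ε‖ ≤ 1 / 2) : |arg (1 + ε)| ≤ 3 / 2 * ‖ε‖ := by
  rw [← log_im]
  exact (abs_im_le_norm _).trans (norm_log_one_add_half_le_self hε)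

/-- Write `exp w - 1 = w * (1 + ε)` with `‖ε‖ ≤ ‖w‖`; since `|arg w| ≤ π / 2` and `arg (1 + ε)` is
small, the two arguments add without wrapping around. -/
theorem abs_arg_exp_sub_one_sub_arg_le {w : ℂ} (hre : 0 ≤ w.re) (hw : ‖w‖ ≤ 1 / 2) :
    |arg (exp w - 1) - arg w| ≤ 3 / 2 * ‖w‖ := by
  rcases eq_or_ne w 0 with rfl | hw0
  · simp
  set ε := (exp w - 1 - w) / w
  have hε : ‖ε‖ ≤ ‖w‖ := by
    rw [norm_div, div_le_iff₀ (norm_pos_iff.2 hw0), ← sq]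
    exact norm_exp_sub_one_sub_id_le (hw.trans (by norm_num))
  have hfactor : exp w - 1 = w * (1 + ε) := by
    rw [mul_add, mul_one, mul_div_cancel₀ _ hw0]
    ring
  have harg_ε : |arg (1 + ε)| ≤ 3 / 2 * ‖ε‖ := abs_arg_one_add_le (hε.trans hw)
  have hε0 : 1 + ε ≠ 0 := by
    intro h
    rw [show ε = -1 by linear_combination h, norm_neg, norm_one] at hε
    linarith
  have harg_w : |arg w| ≤ π / 2 := abs_arg_le_pi_div_two_iff.2 hre
  have hsum : arg w + arg (1 + ε) ∈ Set.Ioc (-π) π := by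
    rw [abs_le] at harg_ε harg_w
    constructor <;> linarith [pi_gt_three]
  rw [hfactor, arg_mul hw0 hε0 hsum, add_sub_cancel_left]
  linarith

theorem two_mul_arg_sub_le_two_mul_arg_exp_div_sub_one {z : ℂ} (hre : 0 ≤ z.re) {m : ℝ}
    (hm0 : 0 < m) (hm : 2 * ‖z‖ ≤ m) :
    2 * m * arg z - 3 * ‖z‖ ≤ 2 * m * arg (exp (z / m) - 1) := by
  have hdiv : z / m = z * ((m⁻¹ : ℝ) : ℂ) := by push_cast; ring
  have hnorm : ‖z / m‖ = ‖z‖ / m := by rw [norm_div, norm_real, Real.norm_of_nonneg hm0.le]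
  have hbound := abs_arg_exp_sub_one_sub_arg_le (w := z / m)
    (by rw [div_ofReal_re]; positivity) (by rw [hnorm, div_le_iff₀ hm0]; linarith)
  rw [hnorm, hdiv, arg_mul_real (inv_pos.2 hm0), ← hdiv] at hbound
  have := (abs_le.1 hbound).1
  have hscale : 2 * m * (3 / 2 * (‖z‖ / m)) = 3 * ‖z‖ := by field_simp
  nlinarith

end Complex

namespace Real

theorem exp_div_six_le_cosh_sub_cos {x : ℝ} (y : ℝ) (hx : 2 ≤ x) :
    exp x / 6 ≤ cosh x - cos y := by
  have := add_one_le_exp x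
  linarith [cosh_eq x, exp_pos (-x), cos_le_one y]

theorem abs_residue_numerator_le {x : ℝ} (y α β : ℝ) (hx : 0 ≤ x) :
    |(exp (-x) - cos y) * sin α * cosh β + sin y * cos α * sinh β| ≤
      2 * cosh β + |sinh β| := by
  have hexp : |exp (-x) - cos y| ≤ 2 := by
    have := exp_le_one_iff.2 (by linarith : -x ≤ 0)
    rw [abs_le]
    constructor <;> linarith [exp_pos (-x), neg_one_le_cos y, cos_le_one y]
  calc _ ≤ |(exp (-x) - cos y) * sin α * cosh β| + |sin y * cos α * sinh β| := abs_add_le _ _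
    _ = |exp (-x) - cos y| * |sin α| * |cosh β| + |sin y| * |cos α| * |sinh β| := by
        simp only [abs_mul]
    _ ≤ 2 * 1 * cosh β + 1 * 1 * |sinh β| := by
        rw [abs_of_pos (cosh_pos β)]
        gcongr
        exacts [abs_sin_le_one α, abs_sin_le_one y, abs_cos_le_one α]
    _ = 2 * cosh β + |sinh β| := by ring

theorem abs_residue_ratio_le {x : ℝ} (y α β : ℝ) (hx : 2 ≤ x) :
    |((exp (-x) - cos y) * sin α * cosh β + sin y * cos α * sinh β) / (cosh x - cos y)| ≤
      6 * (2 * cosh β + |sinh β|) * exp (-x) := by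
  have hden := exp_div_six_le_cosh_sub_cos y hx
  have hden_pos : 0 < cosh x - cos y := (by positivity : 0 < exp x / 6).trans_le hden
  rw [abs_div, abs_of_pos hden_pos, div_le_iff₀ hden_pos]
  calc _ ≤ 2 * cosh β + |sinh β| := abs_residue_numerator_le y α β (by linarith)
    _ = 6 * (2 * cosh β + |sinh β|) * exp (-x) * (exp x / 6) := by
        rw [exp_neg]; field_simp
    _ ≤ _ := by gcongr

end Real

theorem residue_contribution_bound_pos_general (a b t : ℝ) (ha : 0 < a) (hb : 0 < b) (ht : 0 < t)
    (u₀ v₀ R : ℝ → ℝ)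
    (hv : ∀ m : ℝ, v₀ m =
      (Complex.log (Complex.exp (((a : ℂ) + Complex.I * b) * t / m) - 1)).im)
    (hR : ∀ m : ℝ, R m = Real.pi / b *
      (((Real.exp (-(2 * m * v₀ m)) - Real.cos (2 * m * u₀ m)) * Real.sin (a * t) *
          Real.cosh (b * t) +
        Real.sin (2 * m * u₀ m) * Real.cos (a * t) * Real.sinh (b * t)) /
        (Real.cosh (2 * m * v₀ m) - Real.cos (2 * m * u₀ m)))) :
    ∃ C M : ℝ, 0 < C ∧ 0 < M ∧ ∀ m : ℝ, M ≤ m →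
      |R m| ≤ C * Real.exp (-(2 * m * Real.arctan (b / a))) := by
  set θ := Real.arctan (b / a)
  set w : ℂ := ((a : ℂ) + Complex.I * b) * t
  have hθ : 0 < θ := Real.arctan_pos.2 (div_pos hb ha)
  have hre : 0 < w.re := by simp [w]; positivity
  have harg : arg w = θ := by
    rw [arg_mul_real ht, arg_eq_arctan_of_re_pos (by simpa using ha)]
    simp [θ]
  set N := 2 * Real.cosh (b * t) + |Real.sinh (b * t)|
  refine ⟨π / b * (6 * N) * Real.exp (3 * ‖w‖), 2 * ‖w‖ + (2 + 3 * ‖w‖) / (2 * θ),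
    by positivity, by positivity, fun m hm ↦ ?_⟩
  have hq : 0 ≤ (2 + 3 * ‖w‖) / (2 * θ) := by positivity
  have hm_w : 2 * ‖w‖ ≤ m := by linarith
  have hm_arg : 2 + 3 * ‖w‖ ≤ m * (2 * θ) := by
    rw [← div_le_iff₀ (by positivity)]
    linarith [norm_nonneg w]
  have hm0 : 0 < m := by nlinarith [norm_nonneg w]
  have hv_ge : 2 * m * θ - 3 * ‖w‖ ≤ 2 * m * v₀ m := by
    rw [hv, log_im, ← harg]
    exact two_mul_arg_sub_le_two_mul_arg_exp_div_sub_one hre.le hm0 hm_w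
  rw [hR m, abs_mul, abs_of_pos (by positivity : 0 < π / b)]
  calc _ ≤ π / b * (6 * N * Real.exp (-(2 * m * v₀ m))) := by
        gcongr
        exact Real.abs_residue_ratio_le _ _ _ (by linarith)
    _ ≤ π / b * (6 * N * Real.exp (3 * ‖w‖ + -(2 * m * θ))) := by gcongr; linarith
    _ = _ := by rw [Real.exp_add]; ring

/-- For a > 0: the residue contribution R_m (with u₀ + i v₀ = Log(e^{(a+ib)t/m} − 1))
satisfies R_m = O(e^{−2m·arctan(b/a)}) as m → ∞. -/
theorem residue_contribution_bound_pos (a b t : ℝ) (ha : 0 < a) (hb : 0 < b) (ht : 0 < t)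
    (u₀ v₀ R : ℝ → ℝ)
    (hu : ∀ m : ℝ, u₀ m =
      (Complex.log (Complex.exp (((a : ℂ) + Complex.I * b) * t / m) - 1)).re)
    (hv : ∀ m : ℝ, v₀ m =
      (Complex.log (Complex.exp (((a : ℂ) + Complex.I * b) * t / m) - 1)).im)
    (hR : ∀ m : ℝ, R m = Real.pi / b *
      (((Real.exp (-(2 * m * v₀ m)) - Real.cos (2 * m * u₀ m)) * Real.sin (a * t) *
          Real.cosh (b * t) +
        Real.sin (2 * m * u₀ m) * Real.cos (a * t) * Real.sinh (b * t)) /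
        (Real.cosh (2 * m * v₀ m) - Real.cos (2 * m * u₀ m)))) :
    ∃ C M : ℝ, 0 < C ∧ 0 < M ∧ ∀ m : ℝ, M ≤ m →
      |R m| ≤ C * Real.exp (-(2 * m * Real.arctan (b / a))) :=
  residue_contribution_bound_pos_general a b t ha hb ht u₀ v₀ R hv hR
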